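/- (Gap analysis, Case 6: R12 ≤ R21, R13 ≥ R31, R23 ≤ R32; cyclic strategy for the cycle 1→3→2→1 needed.) Suppose the nonnegative rate tuple lies in C̲'_g and additionally R12 ≤ R21, R13 ≥ R31, R23 ≤ R32. Let R132^c = min(R21−R12, R32−R23, R13−R31). Define α32^b = (2^{2R23+1}−1)/(2h3²P), α31^b = 2^{2R23+1}(2^{2R31+1}−1)/(2h3²P), α32^c = 2^{2R23+2R31+2}(2^{2R132^c+1}−1)/(2h3²P), α32^u = 2^{2R132^c+2R23+2R31+3}(2^{2(R32−R23−R132^c)}−1)/(h3²P), α21^b = 2^{2R32+2R31+3}(2^{2R12+1}−1)/(2h2²P), α21^c = 2^{2R12+2R32+2R31+4}(2^{2R132^c+1}−1)/(2h2²P), α21^u = 2^{2R12+2R32+2R132^c+2R31+5}(2^{2(R21−R12−R132^c)}−1)/(h2²P), α13^u = 2^{2R21+2R32+2R31+5}(2^{2(R13−R31−R132^c)}−1)/(h1²P), with α23^b = (h3²/h2²)α32^b, α13^b = (h3²/h1²)α31^b, α12^b = (h2²/h1²)α21^b, α13^c = (h3²/h1²)α32^c, ᾶ13^c = (h2²/h1²)α21^c.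 Then α32^b+α31^b+α32^c+α32^u ≤ 1, α23^b+α21^b+α21^c+α21^u ≤ 1, α13^b+α12^b+α13^c+ᾶ13^c+α13^u ≤ 1, and (2^{2(R13+R23)}−1)/(h3²P) + 2^{2(R13+R23)}(2^{2(R32−R23+R12)}−1)/(h2²P) + 2^{2(R13+R32+R12)}(2^{2(R21−R12−R132^c)}−1)/(h1²P) ≤ 1. -/

import Mathlib

noncomputable def Cg (x : ℝ) : ℝ := (1 / 2) * Real.logb 2 (1 + x)

/-!
Put `A, B, C, D, E, F, G = 2 ^ (2 R)` for `R = R12, R13, R21, R23, R31, R32, R132c`. Each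
constraint of the region becomes a polynomial bound such as `16 E F ≤ 1 + h3² P`, and each
power-allocation parameter a rational function of these atoms. Along every user's decoding order
the parameters telescope, so each sum collapses to a short closed form controlled by one or two
constraints. The one genuinely cyclic term is `B C F / G = 2 ^ (2 (R13 + R21 + R32 - R132c))`:
as `R132c` is the least of `R21 - R12`, `R32 - R23`, `R13 - R31`, it equals one of `A B F`,
`B C D`, `C E F`, and the cut-set constraints bound each of these by `(1 + 2 h1² P) / 64`.
-/

lemma two_rpow_mul_two_rpow_le_of_le_Cg_sub {x y c : ℝ} (hx : 0 ≤ x) (h : y ≤ Cg x - c) :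
    (2:ℝ) ^ (2 * c) * 2 ^ (2 * y) ≤ 1 + x := by
  rw [← Real.rpow_add two_pos, ← Real.le_logb_iff_rpow_le one_lt_two (by linarith)]
  unfold Cg at h
  linarith

lemma Cg_le_Cg {x y : ℝ} (hx : 0 ≤ x) (hxy : x ≤ y) : Cg x ≤ Cg y := by
  unfold Cg
  gcongr
  linarith

lemma Cg_four_mul_le {x : ℝ} (hx : 0 ≤ x) : Cg (4 * x) ≤ Cg (2 * x) + 1 / 2 := by
  have h : Real.logb 2 (1 + 4 * x) ≤ Real.logb 2 (2 * (1 + 2 * x)) :=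
    Real.logb_le_logb_of_le one_lt_two (by linarith) (by linarith)
  rw [Real.logb_mul two_ne_zero (by linarith), Real.logb_self_eq_one one_lt_two] at h
  unfold Cg
  linarith

lemma sq_abs_add_abs_le {a b : ℝ} (h : b ^ 2 ≤ a ^ 2) : (|a| + |b|) ^ 2 ≤ 4 * a ^ 2 := by
  nlinarith [sq_nonneg (|a| - |b|), sq_abs a, sq_abs b]

lemma cyclic_rate_le {P h1 h2 h3 R12 R13 R21 R23 R31 R32 R132c : ℝ} (hP : 0 < P)
    (hh12 : h2 ^ 2 ≤ h1 ^ 2) (hh23 : h3 ^ 2 ≤ h2 ^ 2) (hh3 : 0 < h3 ^ 2)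
    (hG3 : R12 + R13 + R32 ≤ Cg (h2 ^ 2 * P + h3 ^ 2 * P) - 3)
    (hG6 : R13 + R23 + R21 ≤ Cg (h1 ^ 2 * P + h3 ^ 2 * P) - 3)
    (hG8 : R21 + R31 + R32 ≤ Cg ((|h2| + |h3|) ^ 2 * P) - 7 / 2)
    (hR132c : R132c = min (R21 - R12) (min (R32 - R23) (R13 - R31))) :
    R13 + R21 + R32 - R132c ≤ Cg (2 * (h1 ^ 2 * P)) - 3 := by
  have hx3 : 0 ≤ h3 ^ 2 * P := by positivity
  have hx21 : h2 ^ 2 * P ≤ h1 ^ 2 * P := by gcongr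
  have hx32 : h3 ^ 2 * P ≤ h2 ^ 2 * P := by gcongr
  have hsum : (|h2| + |h3|) ^ 2 * P ≤ 4 * (h1 ^ 2 * P) := by
    nlinarith [sq_abs_add_abs_le hh23]
  have h3' := Cg_le_Cg (by positivity) (show h2 ^ 2 * P + h3 ^ 2 * P ≤ 2 * (h1 ^ 2 * P) by linarith)
  have h6' := Cg_le_Cg (by positivity) (show h1 ^ 2 * P + h3 ^ 2 * P ≤ 2 * (h1 ^ 2 * P) by linarith)
  have h8' := (Cg_le_Cg (by positivity) hsum).trans (Cg_four_mul_le (by positivity))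
  suffices R13 + R21 + R32 - (Cg (2 * (h1 ^ 2 * P)) - 3) ≤ R132c by linarith
  rw [hR132c]
  exact le_min (by linarith) (le_min (by linarith) (by linarith))

lemma two_rpow_mul_two_rpow_le {a b c : ℝ} (h : a + b ≤ c) :
    (2:ℝ) ^ (2 * a) * 2 ^ (2 * b) ≤ 2 ^ (2 * c) := by
  rw [← Real.rpow_add two_pos]
  exact Real.rpow_le_rpow_of_exponent_le one_le_two (by linarith)

lemma uplink_user3_le_one {P h3 R23 R31 R32 R132c a32b a31b a32c a32u : ℝ}
    (hP : 0 < P) (hh3 : 0 < h3 ^ 2)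
    (hG1 : R31 + R32 ≤ Cg (h3 ^ 2 * P) - 2)
    (ha32b : a32b = ((2:ℝ) ^ (2 * R23 + 1) - 1) / (2 * h3 ^ 2 * P))
    (ha31b : a31b = (2:ℝ) ^ (2 * R23 + 1) * ((2:ℝ) ^ (2 * R31 + 1) - 1) / (2 * h3 ^ 2 * P))
    (ha32c : a32c = (2:ℝ) ^ (2 * R23 + 2 * R31 + 2) * ((2:ℝ) ^ (2 * R132c + 1) - 1) / (2 * h3 ^ 2 * P))
    (ha32u : a32u = (2:ℝ) ^ (2 * R132c + 2 * R23 + 2 * R31 + 3) * ((2:ℝ) ^ (2 * (R32 - R23 - R132c)) - 1) / (h3 ^ 2 * P)) :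
    a32b + a31b + a32c + a32u ≤ 1 := by
  have hcap := two_rpow_mul_two_rpow_le_of_le_Cg_sub (by positivity) hG1
  subst ha32b ha31b ha32c ha32u
  simp only [mul_add (2:ℝ), mul_sub (2:ℝ), Real.rpow_add two_pos, Real.rpow_sub two_pos,
    Real.rpow_one, Real.rpow_ofNat] at hcap ⊢
  norm_num at hcap ⊢
  set D := (2:ℝ) ^ (2 * R23)
  set E := (2:ℝ) ^ (2 * R31)
  set F := (2:ℝ) ^ (2 * R32)
  set G := (2:ℝ) ^ (2 * R132c)
  have hD : 0 < D := by positivity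
  have hE : 0 < E := by positivity
  have hG : 0 < G := by positivity
  calc _ = (16 * (E * F) - 8 * (D * E * G) - 1) / (2 * (h3 ^ 2 * P)) := by
        field_simp
        ring
    _ ≤ 1 := by
        rw [div_le_one (by positivity)]
        linarith [mul_pos (mul_pos hD hE) hG, mul_pos hh3 hP]

lemma uplink_user2_le_one {P h2 h3 R12 R21 R23 R31 R32 R132c a32b a21b a21c a21u a23b : ℝ}
    (hP : 0 < P) (hh23 : h3 ^ 2 ≤ h2 ^ 2) (hh3 : 0 < h3 ^ 2) (hr31 : 0 ≤ R31)
    (hG8 : R21 + R31 + R32 ≤ Cg ((|h2| + |h3|) ^ 2 * P) - 7 / 2) (hc3 : R23 ≤ R32)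
    (ha32b : a32b = ((2:ℝ) ^ (2 * R23 + 1) - 1) / (2 * h3 ^ 2 * P))
    (ha21b : a21b = (2:ℝ) ^ (2 * R32 + 2 * R31 + 3) * ((2:ℝ) ^ (2 * R12 + 1) - 1) / (2 * h2 ^ 2 * P))
    (ha21c : a21c = (2:ℝ) ^ (2 * R12 + 2 * R32 + 2 * R31 + 4) * ((2:ℝ) ^ (2 * R132c + 1) - 1) / (2 * h2 ^ 2 * P))
    (ha21u : a21u = (2:ℝ) ^ (2 * R12 + 2 * R32 + 2 * R132c + 2 * R31 + 5) * ((2:ℝ) ^ (2 * (R21 - R12 - R132c)) - 1) / (h2 ^ 2 * P))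
    (ha23b : a23b = h3 ^ 2 / h2 ^ 2 * a32b) :
    a23b + a21b + a21c + a21u ≤ 1 := by
  have hh2 : 0 < h2 ^ 2 := hh3.trans_le hh23
  have h3ne : h3 ≠ 0 := by rintro rfl; simp at hh3
  have hcap := two_rpow_mul_two_rpow_le_of_le_Cg_sub (by positivity) hG8
  have hsum : (|h2| + |h3|) ^ 2 * P ≤ 4 * (h2 ^ 2 * P) := by
    nlinarith [sq_abs_add_abs_le hh23]
  have hDF : (2:ℝ) ^ (2 * R23) ≤ 2 ^ (2 * R32) :=
    Real.rpow_le_rpow_of_exponent_le one_le_two (by linarith)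
  have hE : 1 ≤ (2:ℝ) ^ (2 * R31) := Real.one_le_rpow one_le_two (by linarith)
  subst ha23b ha32b ha21b ha21c ha21u
  simp only [mul_add (2:ℝ), mul_sub (2:ℝ), Real.rpow_add two_pos, Real.rpow_sub two_pos,
    Real.rpow_one, Real.rpow_ofNat] at hcap ⊢
  norm_num at hcap ⊢
  set A := (2:ℝ) ^ (2 * R12)
  set C := (2:ℝ) ^ (2 * R21)
  set D := (2:ℝ) ^ (2 * R23)
  set E := (2:ℝ) ^ (2 * R31)
  set F := (2:ℝ) ^ (2 * R32)
  set G := (2:ℝ) ^ (2 * R132c)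
  have hA : 0 < A := by positivity
  have hG : 0 < G := by positivity
  have hFE : F ≤ E * F := le_mul_of_one_le_left (by positivity) hE
  have hEF : 0 < E * F := by positivity
  have hAEFG : 0 < A * E * F * G := by positivity
  calc _ = (2 * D - 1 - 8 * (E * F) + 64 * (C * E * F) - 32 * (A * E * F * G)) / (2 * (h2 ^ 2 * P)) := by
        field_simp
        ring
    _ ≤ 1 := by
        rw [div_le_one (by positivity)]
        linarith

lemma uplink_user1_le_one {P h1 h2 h3 R12 R13 R21 R23 R31 R32 R132c
      a31b a32c a21b a21c a13u a13b a12b a13c at13c : ℝ}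
    (hP : 0 < P) (hh12 : h2 ^ 2 ≤ h1 ^ 2) (hh23 : h3 ^ 2 ≤ h2 ^ 2) (hh3 : 0 < h3 ^ 2)
    (hr23 : 0 ≤ R23)
    (hcyc : R13 + R21 + R32 - R132c ≤ Cg (2 * (h1 ^ 2 * P)) - 3)
    (hm12 : R132c ≤ R21 - R12) (hm23 : R132c ≤ R32 - R23)
    (ha31b : a31b = (2:ℝ) ^ (2 * R23 + 1) * ((2:ℝ) ^ (2 * R31 + 1) - 1) / (2 * h3 ^ 2 * P))
    (ha32c : a32c = (2:ℝ) ^ (2 * R23 + 2 * R31 + 2) * ((2:ℝ) ^ (2 * R132c + 1) - 1) / (2 * h3 ^ 2 * P))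
    (ha21b : a21b = (2:ℝ) ^ (2 * R32 + 2 * R31 + 3) * ((2:ℝ) ^ (2 * R12 + 1) - 1) / (2 * h2 ^ 2 * P))
    (ha21c : a21c = (2:ℝ) ^ (2 * R12 + 2 * R32 + 2 * R31 + 4) * ((2:ℝ) ^ (2 * R132c + 1) - 1) / (2 * h2 ^ 2 * P))
    (ha13u : a13u = (2:ℝ) ^ (2 * R21 + 2 * R32 + 2 * R31 + 5) * ((2:ℝ) ^ (2 * (R13 - R31 - R132c)) - 1) / (h1 ^ 2 * P))
    (ha13b : a13b = h3 ^ 2 / h1 ^ 2 * a31b)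
    (ha12b : a12b = h2 ^ 2 / h1 ^ 2 * a21b)
    (ha13c : a13c = h3 ^ 2 / h1 ^ 2 * a32c)
    (hat13c : at13c = h2 ^ 2 / h1 ^ 2 * a21c) :
    a13b + a12b + a13c + at13c + a13u ≤ 1 := by
  have hh2 : 0 < h2 ^ 2 := hh3.trans_le hh23
  have hh1 : 0 < h1 ^ 2 := hh2.trans_le hh12
  have h3ne : h3 ≠ 0 := by rintro rfl; simp at hh3
  have h2ne : h2 ≠ 0 := by rintro rfl; simp at hh2
  have hcap := two_rpow_mul_two_rpow_le_of_le_Cg_sub (by positivity) hcyc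
  have hAGC := two_rpow_mul_two_rpow_le (show R12 + R132c ≤ R21 by linarith)
  have hDGF := two_rpow_mul_two_rpow_le (show R23 + R132c ≤ R32 by linarith)
  have hD : 1 ≤ (2:ℝ) ^ (2 * R23) := Real.one_le_rpow one_le_two (by linarith)
  subst ha13b ha12b ha13c hat13c ha31b ha32c ha21b ha21c ha13u
  simp only [mul_add (2:ℝ), mul_sub (2:ℝ), Real.rpow_add two_pos, Real.rpow_sub two_pos,
    Real.rpow_one, Real.rpow_ofNat] at hcap ⊢
  norm_num at hcap ⊢
  set A := (2:ℝ) ^ (2 * R12)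
  set B := (2:ℝ) ^ (2 * R13)
  set C := (2:ℝ) ^ (2 * R21)
  set D := (2:ℝ) ^ (2 * R23)
  set E := (2:ℝ) ^ (2 * R31)
  set F := (2:ℝ) ^ (2 * R32)
  set G := (2:ℝ) ^ (2 * R132c)
  have hDEG : D * G * E ≤ F * E := by gcongr
  have hAEFG : A * G * (E * F) ≤ C * (E * F) := by gcongr
  have hE : 0 < E := by positivity
  have hCEF : 0 < C * E * F := by positivity
  calc _ = (-2 * D - 8 * (E * F) + 8 * (D * E * G) + 32 * (A * E * F * G) - 64 * (C * E * F)
          + 64 * (B * C * F / G)) / (2 * (h1 ^ 2 * P)) := by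
        field_simp
        ring
    _ ≤ 1 := by
        rw [div_le_one (by positivity)]
        linarith

lemma downlink_relay_power_le_one {P h1 h2 h3 R12 R13 R21 R23 R32 R132c : ℝ}
    (hP : 0 < P) (hh12 : h2 ^ 2 ≤ h1 ^ 2) (hh23 : h3 ^ 2 ≤ h2 ^ 2) (hh3 : 0 < h3 ^ 2)
    (hr12 : 0 ≤ R12) (hr13 : 0 ≤ R13) (hr23 : 0 ≤ R23) (hr32 : 0 ≤ R32)
    (hG2 : R13 + R23 ≤ Cg (h3 ^ 2 * P) - 2)
    (hG3 : R12 + R13 + R32 ≤ Cg (h2 ^ 2 * P + h3 ^ 2 * P) - 3)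
    (hcyc : R13 + R21 + R32 - R132c ≤ Cg (2 * (h1 ^ 2 * P)) - 3) :
    ((2:ℝ) ^ (2 * (R13 + R23)) - 1) / (h3 ^ 2 * P)
      + (2:ℝ) ^ (2 * (R13 + R23)) * ((2:ℝ) ^ (2 * (R32 - R23 + R12)) - 1) / (h2 ^ 2 * P)
      + (2:ℝ) ^ (2 * (R13 + R32 + R12)) * ((2:ℝ) ^ (2 * (R21 - R12 - R132c)) - 1) / (h1 ^ 2 * P) ≤ 1 := by
  have hh2 : 0 < h2 ^ 2 := hh3.trans_le hh23
  have hh1 : 0 < h1 ^ 2 := hh2.trans_le hh12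
  have hcap2 := two_rpow_mul_two_rpow_le_of_le_Cg_sub (by positivity) hG2
  have hcap3 := two_rpow_mul_two_rpow_le_of_le_Cg_sub (by positivity) hG3
  have hcapc := two_rpow_mul_two_rpow_le_of_le_Cg_sub (by positivity) hcyc
  have hA := Real.one_le_rpow one_le_two (by linarith : 0 ≤ 2 * R12)
  have hB := Real.one_le_rpow one_le_two (by linarith : 0 ≤ 2 * R13)
  have hD := Real.one_le_rpow one_le_two (by linarith : 0 ≤ 2 * R23)
  have hF := Real.one_le_rpow one_le_two (by linarith : 0 ≤ 2 * R32)
  simp only [mul_add (2:ℝ), mul_sub (2:ℝ), Real.rpow_add two_pos, Real.rpow_sub two_pos]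
    at hcap2 hcap3 hcapc ⊢
  norm_num at hcap2 hcap3 hcapc ⊢
  set A := (2:ℝ) ^ (2 * R12)
  set B := (2:ℝ) ^ (2 * R13)
  set C := (2:ℝ) ^ (2 * R21)
  set D := (2:ℝ) ^ (2 * R23)
  set F := (2:ℝ) ^ (2 * R32)
  set G := (2:ℝ) ^ (2 * R132c)
  have hx32 : h3 ^ 2 * P ≤ h2 ^ 2 * P := by gcongr
  have hABF : 1 ≤ A * B * F := one_le_mul_of_one_le_of_one_le (one_le_mul_of_one_le_of_one_le hA hB) hF
  have hBD : 1 ≤ B * D := one_le_mul_of_one_le_of_one_le hB hD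
  calc _ = (B * D - 1) / (h3 ^ 2 * P) + (A * B * F - B * D) / (h2 ^ 2 * P)
          + (B * C * F / G - A * B * F) / (h1 ^ 2 * P) := by
        field_simp
    _ ≤ 1 / 16 + 1 / 32 + 1 / 32 := by
        gcongr ?_ + ?_ + ?_ <;> rw [div_le_iff₀ (by positivity)] <;> linarith
    _ ≤ 1 := by norm_num

theorem stmt_16_general
    (P h1 h2 h3 : ℝ) (hP : 0 < P)
    (hh12 : h2 ^ 2 ≤ h1 ^ 2) (hh23 : h3 ^ 2 ≤ h2 ^ 2) (hh3 : 0 < h3 ^ 2)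
    (R12 R13 R21 R23 R31 R32 : ℝ)
    (hr12 : 0 ≤ R12) (hr13 : 0 ≤ R13)
    (hr23 : 0 ≤ R23) (hr31 : 0 ≤ R31) (hr32 : 0 ≤ R32)
    (hG1 : R31 + R32 ≤ Cg (h3 ^ 2 * P) - 2)
    (hG2 : R13 + R23 ≤ Cg (h3 ^ 2 * P) - 2)
    (hG3 : R12 + R13 + R32 ≤ Cg (h2 ^ 2 * P + h3 ^ 2 * P) - 3)
    (hG6 : R13 + R23 + R21 ≤ Cg (h1 ^ 2 * P + h3 ^ 2 * P) - 3)
    (hG8 : R21 + R31 + R32 ≤ Cg ((|h2| + |h3|) ^ 2 * P) - 7 / 2)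
    (hc3 : R23 ≤ R32)
    (R132c : ℝ)
    (hR132c : R132c = min (R21 - R12) (min (R32 - R23) (R13 - R31)))
    (a32b a31b a32c a32u a21b a21c a21u a13u a23b a13b a12b a13c at13c : ℝ)
    (ha32b : a32b = ((2:ℝ) ^ (2 * R23 + 1) - 1) / (2 * h3 ^ 2 * P))
    (ha31b : a31b = (2:ℝ) ^ (2 * R23 + 1) * ((2:ℝ) ^ (2 * R31 + 1) - 1) / (2 * h3 ^ 2 * P))
    (ha32c : a32c = (2:ℝ) ^ (2 * R23 + 2 * R31 + 2) * ((2:ℝ) ^ (2 * R132c + 1) - 1) / (2 * h3 ^ 2 * P))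
    (ha32u : a32u = (2:ℝ) ^ (2 * R132c + 2 * R23 + 2 * R31 + 3) * ((2:ℝ) ^ (2 * (R32 - R23 - R132c)) - 1) / (h3 ^ 2 * P))
    (ha21b : a21b = (2:ℝ) ^ (2 * R32 + 2 * R31 + 3) * ((2:ℝ) ^ (2 * R12 + 1) - 1) / (2 * h2 ^ 2 * P))
    (ha21c : a21c = (2:ℝ) ^ (2 * R12 + 2 * R32 + 2 * R31 + 4) * ((2:ℝ) ^ (2 * R132c + 1) - 1) / (2 * h2 ^ 2 * P))
    (ha21u : a21u = (2:ℝ) ^ (2 * R12 + 2 * R32 + 2 * R132c + 2 * R31 + 5) * ((2:ℝ) ^ (2 * (R21 - R12 - R132c)) - 1) / (h2 ^ 2 * P))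
    (ha13u : a13u = (2:ℝ) ^ (2 * R21 + 2 * R32 + 2 * R31 + 5) * ((2:ℝ) ^ (2 * (R13 - R31 - R132c)) - 1) / (h1 ^ 2 * P))
    (ha23b : a23b = h3 ^ 2 / h2 ^ 2 * a32b)
    (ha13b : a13b = h3 ^ 2 / h1 ^ 2 * a31b)
    (ha12b : a12b = h2 ^ 2 / h1 ^ 2 * a21b)
    (ha13c : a13c = h3 ^ 2 / h1 ^ 2 * a32c)
    (hat13c : at13c = h2 ^ 2 / h1 ^ 2 * a21c) :
    a32b + a31b + a32c + a32u ≤ 1 ∧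
    a23b + a21b + a21c + a21u ≤ 1 ∧
    a13b + a12b + a13c + at13c + a13u ≤ 1 ∧
    ((2:ℝ) ^ (2 * (R13 + R23)) - 1) / (h3 ^ 2 * P)
      + (2:ℝ) ^ (2 * (R13 + R23)) * ((2:ℝ) ^ (2 * (R32 - R23 + R12)) - 1) / (h2 ^ 2 * P)
      + (2:ℝ) ^ (2 * (R13 + R32 + R12)) * ((2:ℝ) ^ (2 * (R21 - R12 - R132c)) - 1) / (h1 ^ 2 * P) ≤ 1 := by
  have hcyc := cyclic_rate_le hP hh12 hh23 hh3 hG3 hG6 hG8 hR132c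
  have hm12 : R132c ≤ R21 - R12 := hR132c ▸ min_le_left _ _
  have hm23 : R132c ≤ R32 - R23 := hR132c ▸ (min_le_right _ _).trans (min_le_left _ _)
  exact ⟨uplink_user3_le_one hP hh3 hG1 ha32b ha31b ha32c ha32u,
    uplink_user2_le_one hP hh23 hh3 hr31 hG8 hc3 ha32b ha21b ha21c ha21u ha23b,
    uplink_user1_le_one hP hh12 hh23 hh3 hr23 hcyc hm12 hm23 ha31b ha32c ha21b ha21c ha13u
      ha13b ha12b ha13c hat13c,
    downlink_relay_power_le_one hP hh12 hh23 hh3 hr12 hr13 hr23 hr32 hG2 hG3 hcyc⟩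

theorem stmt_16
    (P h1 h2 h3 : ℝ) (hP : 0 < P)
    (hh12 : h2 ^ 2 ≤ h1 ^ 2) (hh23 : h3 ^ 2 ≤ h2 ^ 2) (hh3 : 0 < h3 ^ 2)
    (R12 R13 R21 R23 R31 R32 : ℝ)
    (hr12 : 0 ≤ R12) (hr13 : 0 ≤ R13) (hr21 : 0 ≤ R21)
    (hr23 : 0 ≤ R23) (hr31 : 0 ≤ R31) (hr32 : 0 ≤ R32)
    (hG1 : R31 + R32 ≤ Cg (h3 ^ 2 * P) - 2)
    (hG2 : R13 + R23 ≤ Cg (h3 ^ 2 * P) - 2)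
    (hG3 : R12 + R13 + R32 ≤ Cg (h2 ^ 2 * P + h3 ^ 2 * P) - 3)
    (hG4 : R13 + R23 + R12 ≤ Cg (h2 ^ 2 * P + h3 ^ 2 * P) - 3)
    (hG5 : R12 + R31 + R32 ≤ Cg (h1 ^ 2 * P + h2 ^ 2 * P) - 3)
    (hG6 : R13 + R23 + R21 ≤ Cg (h1 ^ 2 * P + h3 ^ 2 * P) - 3)
    (hG7 : R21 + R31 + R23 ≤ Cg ((|h2| + |h3|) ^ 2 * P) - 7 / 2)
    (hG8 : R21 + R31 + R32 ≤ Cg ((|h2| + |h3|) ^ 2 * P) - 7 / 2)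
    (hc1 : R12 ≤ R21) (hc2 : R31 ≤ R13) (hc3 : R23 ≤ R32)
    (R132c : ℝ)
    (hR132c : R132c = min (R21 - R12) (min (R32 - R23) (R13 - R31)))
    (a32b a31b a32c a32u a21b a21c a21u a13u a23b a13b a12b a13c at13c : ℝ)
    (ha32b : a32b = ((2:ℝ) ^ (2 * R23 + 1) - 1) / (2 * h3 ^ 2 * P))
    (ha31b : a31b = (2:ℝ) ^ (2 * R23 + 1) * ((2:ℝ) ^ (2 * R31 + 1) - 1) / (2 * h3 ^ 2 * P))
    (ha32c : a32c = (2:ℝ) ^ (2 * R23 + 2 * R31 + 2) * ((2:ℝ) ^ (2 * R132c + 1) - 1) / (2 * h3 ^ 2 * P))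
    (ha32u : a32u = (2:ℝ) ^ (2 * R132c + 2 * R23 + 2 * R31 + 3) * ((2:ℝ) ^ (2 * (R32 - R23 - R132c)) - 1) / (h3 ^ 2 * P))
    (ha21b : a21b = (2:ℝ) ^ (2 * R32 + 2 * R31 + 3) * ((2:ℝ) ^ (2 * R12 + 1) - 1) / (2 * h2 ^ 2 * P))
    (ha21c : a21c = (2:ℝ) ^ (2 * R12 + 2 * R32 + 2 * R31 + 4) * ((2:ℝ) ^ (2 * R132c + 1) - 1) / (2 * h2 ^ 2 * P))
    (ha21u : a21u = (2:ℝ) ^ (2 * R12 + 2 * R32 + 2 * R132c + 2 * R31 + 5) * ((2:ℝ) ^ (2 * (R21 - R12 - R132c)) - 1) / (h2 ^ 2 * P))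
    (ha13u : a13u = (2:ℝ) ^ (2 * R21 + 2 * R32 + 2 * R31 + 5) * ((2:ℝ) ^ (2 * (R13 - R31 - R132c)) - 1) / (h1 ^ 2 * P))
    (ha23b : a23b = h3 ^ 2 / h2 ^ 2 * a32b)
    (ha13b : a13b = h3 ^ 2 / h1 ^ 2 * a31b)
    (ha12b : a12b = h2 ^ 2 / h1 ^ 2 * a21b)
    (ha13c : a13c = h3 ^ 2 / h1 ^ 2 * a32c)
    (hat13c : at13c = h2 ^ 2 / h1 ^ 2 * a21c) :
    a32b + a31b + a32c + a32u ≤ 1 ∧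
    a23b + a21b + a21c + a21u ≤ 1 ∧
    a13b + a12b + a13c + at13c + a13u ≤ 1 ∧
    ((2:ℝ) ^ (2 * (R13 + R23)) - 1) / (h3 ^ 2 * P)
      + (2:ℝ) ^ (2 * (R13 + R23)) * ((2:ℝ) ^ (2 * (R32 - R23 + R12)) - 1) / (h2 ^ 2 * P)
      + (2:ℝ) ^ (2 * (R13 + R32 + R12)) * ((2:ℝ) ^ (2 * (R21 - R12 - R132c)) - 1) / (h1 ^ 2 * P) ≤ 1 :=
  stmt_16_general P h1 h2 h3 hP hh12 hh23 hh3 R12 R13 R21 R23 R31 R32 hr12 hr13 hr23 hr31 hr32 hG1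
    hG2 hG3 hG6 hG8 hc3 R132c hR132c a32b a31b a32c a32u a21b a21c a21u a13u a23b a13b a12b a13c
    at13c ha32b ha31b ha32c ha32u ha21b ha21c ha21u ha13u ha23b ha13b ha12b ha13c hat13c
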